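/- Let n ≥ 2 and let f : ℝⁿ → ℝ be continuous, nonnegative and Lebesgue integrable with β := ∫_{ℝⁿ} f dx, such that y ↦ log(|y|/|x−y|) f(y) is Lebesgue integrable for every x ∈ ℝⁿ. Let p₀ ∈ ℝⁿ and define u₋(x) := −(1/c_n) ∫_{ℝⁿ} log(|y|/|x−y|) f(y) dy, u₂(x) := −(1/c_n) ∫_{ℝⁿ ∖ B(p₀,10)} log(|y|/|x−y|) f(y) dy, and c̄ := −(1/c_n) ∫_{B(p₀,10)} log|y| · f(y) dy. Then ∫_{B(p₀,2)} e^{n u₋(z)} dz ≤ C₁ · e^{n u₂(p₀)} · e^{n c̄}, where C₁ = e^{nβ/(4c_n)} · 12^{nβ/c_n} · ω_{n−1} 2ⁿ / n and ω_{n−1} denotes the (n−1)-dimensional surface measure of the unit sphere in ℝⁿ. -/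

import Mathlib

open MeasureTheory Metric Set
open scoped ENNReal

/-- `c_n := 2^{n-2} Γ(n/2) π^{n/2}`. -/
noncomputable def cN (n : ℕ) : ℝ :=
  (2 : ℝ) ^ ((n : ℝ) - 2) * Real.Gamma ((n : ℝ) / 2) * Real.pi ^ ((n : ℝ) / 2)

/-- Logarithmic potential `u(x) = (1/c_n) ∫ log(|y|/|x-y|) f(y) dy`. -/
noncomputable def logPot (n : ℕ) (f : EuclideanSpace ℝ (Fin n) → ℝ)
    (x : EuclideanSpace ℝ (Fin n)) : ℝ :=
  (1 / cN n) * ∫ y, Real.log (‖y‖ / ‖x - y‖) * f y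

/-- `ω` is an `A_p` weight with constant `K` (for `p > 1`):
for every ball `B`, `(⨍_B ω) · (⨍_B ω^{-1/(p-1)})^{p-1} ≤ K`. -/
def IsApWeight (n : ℕ) (p K : ℝ) (ω : EuclideanSpace ℝ (Fin n) → ℝ) : Prop :=
  ∀ (x : EuclideanSpace ℝ (Fin n)) (r : ℝ), 0 < r →
    ((volume (ball x r)).toReal⁻¹ * ∫ y in ball x r, ω y) *
      ((volume (ball x r)).toReal⁻¹ *
        ∫ y in ball x r, (ω y) ^ (-(1 / (p - 1)) : ℝ)) ^ (p - 1) ≤ K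

/-- `δ_ω(x,y) = (∫_{B_{xy}} ω)^{1/n}`, where `B_{xy}` is the closed ball with
center `(x+y)/2` and radius `|x-y|/2`. -/
noncomputable def deltaW (n : ℕ) (ω : EuclideanSpace ℝ (Fin n) → ℝ)
    (x y : EuclideanSpace ℝ (Fin n)) : ℝ :=
  (∫ z in closedBall (midpoint ℝ x y) (dist x y / 2), ω z) ^ ((1 : ℝ) / n)

/-- `d_ω(x,y)`: infimum of `∫₀^L ω(γ(t))^{1/n} dt` over all `L ≥ 0` and all
1-Lipschitz curves `γ : [0,L] → ℝⁿ` joining `x` to `y` inside `B_{xy}`. -/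
noncomputable def dW (n : ℕ) (ω : EuclideanSpace ℝ (Fin n) → ℝ)
    (x y : EuclideanSpace ℝ (Fin n)) : ℝ :=
  sInf {d : ℝ | ∃ (L : ℝ) (γ : ℝ → EuclideanSpace ℝ (Fin n)),
    0 ≤ L ∧ LipschitzOnWith 1 γ (Set.Icc 0 L) ∧ γ 0 = x ∧ γ L = y ∧
    (∀ t ∈ Set.Icc 0 L, γ t ∈ closedBall (midpoint ℝ x y) (dist x y / 2)) ∧
    d = ∫ t in (0 : ℝ)..L, (ω (γ t)) ^ ((1 : ℝ) / n)}

/-- One-dimensional Hausdorff content: infimum of `Σᵢ diam Bᵢ` over countable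
covers of `E` by balls `Bᵢ`. -/
noncomputable def H1content {n : ℕ} (E : Set (EuclideanSpace ℝ (Fin n))) : ℝ≥0∞ :=
  ⨅ (c : ℕ → EuclideanSpace ℝ (Fin n) × ℝ) (_ : E ⊆ ⋃ i, ball (c i).1 (c i).2),
    ∑' i, ENNReal.ofReal (2 * (c i).2)

/-!
For `z ∈ B(p₀,2)` split the potential integral at the ball `B(p₀,10)`. Near `p₀` the kernel
`log (|y|/|z-y|)` is at least `log |y| - log 12`, since `|z-y| < 12`; far from `p₀` it is at least
`log (|y|/|p₀-y|) - log (6/5)`, since `|z-y| < (6/5)|p₀-y|`, and `log (6/5) ≤ 1/4`. Hence `u₋` is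
bounded above on `B(p₀,2)` by a constant, and integrating its exponential gives the bound.
-/

lemma cN_pos {n : ℕ} (hn : 1 ≤ n) : 0 < cN n := by
  have hΓ : 0 < Real.Gamma ((n : ℝ) / 2) := Real.Gamma_pos_of_pos (by positivity)
  unfold cN
  positivity

section LogKernel

variable {E : Type*} [NormedAddCommGroup E]

lemma log_norm_sub_log_le_log_norm_div {y z : E} {R : ℝ} (hy : y ≠ 0) (hyz : y ≠ z)
    (h : ‖z - y‖ ≤ R) : Real.log ‖y‖ - Real.log R ≤ Real.log (‖y‖ / ‖z - y‖) := by
  have hzy : 0 < ‖z - y‖ := norm_pos_iff.2 (sub_ne_zero.2 hyz.symm)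
  rw [Real.log_div (norm_ne_zero_iff.2 hy) hzy.ne']
  linarith [Real.log_le_log hzy h]

lemma log_norm_div_sub_log_le_log_norm_div {x y z : E} {t : ℝ} (hy : y ≠ 0) (hxy : x ≠ y)
    (hzy : z ≠ y) (h : ‖z - y‖ ≤ t * ‖x - y‖) :
    Real.log (‖y‖ / ‖x - y‖) - Real.log t ≤ Real.log (‖y‖ / ‖z - y‖) := by
  have hxy' : 0 < ‖x - y‖ := norm_pos_iff.2 (sub_ne_zero.2 hxy)
  have hzy' : 0 < ‖z - y‖ := norm_pos_iff.2 (sub_ne_zero.2 hzy)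
  have ht : 0 < t := pos_of_mul_pos_left (hzy'.trans_le h) hxy'.le
  have hlog := Real.log_le_log hzy' h
  rw [Real.log_mul ht.ne' hxy'.ne'] at hlog
  rw [Real.log_div (norm_ne_zero_iff.2 hy) hxy'.ne', Real.log_div (norm_ne_zero_iff.2 hy) hzy'.ne']
  linarith

lemma norm_sub_lt_add_of_mem_ball {p y z : E} {r R : ℝ} (hz : z ∈ ball p r) (hy : y ∈ ball p R) :
    ‖z - y‖ < r + R := by
  rw [← dist_eq_norm]
  linarith [dist_triangle_right z y p, mem_ball.1 hz, mem_ball.1 hy]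

lemma norm_sub_le_mul_of_notMem_ball {p y z : E} {r R : ℝ} (hR : 0 < R) (hz : z ∈ ball p r)
    (hy : y ∉ ball p R) : ‖z - y‖ ≤ (1 + r / R) * ‖p - y‖ := by
  rw [mem_ball, not_lt, dist_comm, dist_eq_norm] at hy
  have hzp : ‖z - p‖ < r := by rwa [← dist_eq_norm]
  have hr : r ≤ r / R * ‖p - y‖ := by
    rw [div_mul_eq_mul_div, le_div_iff₀ hR]
    exact mul_le_mul_of_nonneg_left hy (norm_nonneg _ |>.trans_lt hzp).le
  calc ‖z - y‖ ≤ ‖z - p‖ + ‖p - y‖ := norm_sub_le_norm_sub_add_norm_sub z p y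
    _ ≤ (1 + r / R) * ‖p - y‖ := by linarith

end LogKernel

section Potential

variable {E : Type*} [NormedAddCommGroup E] [MeasurableSpace E] [BorelSpace E]
  {μ : Measure E} {f : E → ℝ}

/-- Testing the integrability of the kernel at a point `x` far from the ball shows that the
singularity of `log ‖y‖` at the origin is integrable against `f`. -/
lemma integrableOn_log_norm_mul_ball [NormedSpace ℝ E] [Nontrivial E] [NullSingletonClass μ]
    (hfi : Integrable f μ)
    (hlog : ∀ x, Integrable (fun y => Real.log (‖y‖ / ‖x - y‖) * f y) μ) (p : E) (R : ℝ) :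
    IntegrableOn (fun y => Real.log ‖y‖ * f y) (ball p R) μ := by
  obtain ⟨v, hv⟩ := exists_norm_eq E (by positivity : (0 : ℝ) ≤ |R| + 1)
  set x := p + v
  have hdist : ∀ y ∈ ball p R, 1 ≤ ‖x - y‖ ∧ ‖x - y‖ ≤ 2 * |R| + 1 := by
    intro y hy
    rw [mem_ball, dist_eq_norm] at hy
    have hxy : x - y = v - (y - p) := by simp only [x]; abel
    rw [hxy]
    constructor
    · linarith [norm_sub_norm_le v (y - p), le_abs_self R]
    · linarith [norm_sub_le v (y - p), le_abs_self R]
  have hfar : IntegrableOn (fun y => Real.log ‖x - y‖ * f y) (ball p R) μ := by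
    refine hfi.integrableOn.bdd_mul (c := Real.log (2 * |R| + 1))
      (by fun_prop : Measurable fun y => Real.log ‖x - y‖).aestronglyMeasurable ?_
    filter_upwards [ae_restrict_mem measurableSet_ball] with y hy
    obtain ⟨h1, h2⟩ := hdist y hy
    rw [Real.norm_eq_abs, abs_of_nonneg (Real.log_nonneg h1)]
    exact Real.log_le_log (by linarith) h2
  refine ((hlog x).integrableOn.add hfar).congr ?_
  filter_upwards [ae_restrict_mem measurableSet_ball, ae_restrict_of_ae (μ.ae_ne 0)]
    with y hy hy0
  have hxy : ‖x - y‖ ≠ 0 := by linarith [(hdist y hy).1]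
  rw [Pi.add_apply, Real.log_div (norm_ne_zero_iff.2 hy0) hxy]
  ring

variable [NullSingletonClass μ]

lemma setIntegral_log_norm_mul_sub_le (hf0 : ∀ y, 0 ≤ f y) (hfi : Integrable f μ) {p z : E}
    {r R : ℝ} (hz : z ∈ ball p r)
    (hK : Integrable (fun y => Real.log (‖y‖ / ‖z - y‖) * f y) μ)
    (hL : IntegrableOn (fun y => Real.log ‖y‖ * f y) (ball p R) μ) :
    (∫ y in ball p R, Real.log ‖y‖ * f y ∂μ) - Real.log (r + R) * ∫ y in ball p R, f y ∂μ ≤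
      ∫ y in ball p R, Real.log (‖y‖ / ‖z - y‖) * f y ∂μ := by
  have hc : IntegrableOn (fun y => Real.log (r + R) * f y) (ball p R) μ :=
    hfi.integrableOn.const_mul _
  rw [← integral_const_mul, ← integral_sub hL hc]
  refine setIntegral_mono_on_ae (hL.sub hc) hK.integrableOn measurableSet_ball ?_
  filter_upwards [μ.ae_ne 0, μ.ae_ne z] with y hy0 hyz hy
  rw [← sub_mul]
  exact mul_le_mul_of_nonneg_right (log_norm_sub_log_le_log_norm_div hy0 hyz
    (norm_sub_lt_add_of_mem_ball hz hy).le) (hf0 y)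

lemma setIntegral_compl_log_norm_div_mul_sub_le (hf0 : ∀ y, 0 ≤ f y) (hfi : Integrable f μ)
    {p z : E} {r R : ℝ} (hR : 0 < R) (hz : z ∈ ball p r)
    (hK : ∀ x, Integrable (fun y => Real.log (‖y‖ / ‖x - y‖) * f y) μ) :
    (∫ y in (ball p R)ᶜ, Real.log (‖y‖ / ‖p - y‖) * f y ∂μ) -
        Real.log (1 + r / R) * ∫ y in (ball p R)ᶜ, f y ∂μ ≤
      ∫ y in (ball p R)ᶜ, Real.log (‖y‖ / ‖z - y‖) * f y ∂μ := by
  have hc : IntegrableOn (fun y => Real.log (1 + r / R) * f y) (ball p R)ᶜ μ :=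
    hfi.integrableOn.const_mul _
  rw [← integral_const_mul, ← integral_sub (hK p).integrableOn hc]
  refine setIntegral_mono_on_ae ((hK p).integrableOn.sub hc) (hK z).integrableOn
    measurableSet_ball.compl ?_
  filter_upwards [μ.ae_ne 0, μ.ae_ne z] with y hy0 hyz hy
  have hpy : p ≠ y := fun h => hy (h ▸ mem_ball_self hR)
  rw [← sub_mul]
  exact mul_le_mul_of_nonneg_right (log_norm_div_sub_log_le_log_norm_div hy0 hpy hyz.symm
    (norm_sub_le_mul_of_notMem_ball hR hz hy)) (hf0 y)

end Potential

lemma neg_logPot_le {n : ℕ} (hn : 1 ≤ n) {f : EuclideanSpace ℝ (Fin n) → ℝ}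
    (hf0 : ∀ y, 0 ≤ f y) (hfi : Integrable f)
    (hlog : ∀ x : EuclideanSpace ℝ (Fin n),
      Integrable (fun y => Real.log (‖y‖ / ‖x - y‖) * f y))
    {p z : EuclideanSpace ℝ (Fin n)} {r R : ℝ} (hz : z ∈ ball p r) (hR : 0 < R)
    (hrR : 1 ≤ r + R) :
    -logPot n f z ≤ (Real.log (r + R) + Real.log (1 + r / R)) * (∫ y, f y) / cN n +
      -(1 / cN n) * (∫ y in (ball p R)ᶜ, Real.log (‖y‖ / ‖p - y‖) * f y) +
      -(1 / cN n) * ∫ y in ball p R, Real.log ‖y‖ * f y := by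
  have : Nontrivial (EuclideanSpace ℝ (Fin n)) :=
    Module.nontrivial_of_finrank_pos (R := ℝ) (by rw [finrank_euclideanSpace_fin]; omega)
  have hr : 0 ≤ r := (dist_nonneg.trans_lt (mem_ball.1 hz)).le
  have hnear := setIntegral_log_norm_mul_sub_le hf0 hfi hz (hlog z)
    (integrableOn_log_norm_mul_ball hfi hlog p R)
  have hfar := setIntegral_compl_log_norm_div_mul_sub_le hf0 hfi hR hz hlog
  have hfnn : 0 ≤ᵐ[volume] f := ae_of_all _ hf0
  have key : (∫ y in (ball p R)ᶜ, Real.log (‖y‖ / ‖p - y‖) * f y) +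
      (∫ y in ball p R, Real.log ‖y‖ * f y) -
      (Real.log (r + R) + Real.log (1 + r / R)) * ∫ y, f y ≤
      ∫ y, Real.log (‖y‖ / ‖z - y‖) * f y := by
    calc _ = ((∫ y in ball p R, Real.log ‖y‖ * f y) - Real.log (r + R) * ∫ y, f y) +
          ((∫ y in (ball p R)ᶜ, Real.log (‖y‖ / ‖p - y‖) * f y) -
            Real.log (1 + r / R) * ∫ y, f y) := by ring
      _ ≤ ((∫ y in ball p R, Real.log ‖y‖ * f y) - Real.log (r + R) * ∫ y in ball p R, f y) +
          ((∫ y in (ball p R)ᶜ, Real.log (‖y‖ / ‖p - y‖) * f y) -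
            Real.log (1 + r / R) * ∫ y in (ball p R)ᶜ, f y) := by
        gcongr (_ - _ * ?_) + (_ - _ * ?_)
        · exact Real.log_nonneg hrR
        · exact setIntegral_le_integral hfi hfnn
        · exact Real.log_nonneg (le_add_of_nonneg_right (div_nonneg hr hR.le))
        · exact setIntegral_le_integral hfi hfnn
      _ ≤ _ := add_le_add hnear hfar
      _ = _ := integral_add_compl measurableSet_ball (hlog z)
  unfold logPot
  calc _ ≤ -((1 / cN n) * _) :=
        neg_le_neg (mul_le_mul_of_nonneg_left key (one_div_pos.2 (cN_pos hn)).le)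
    _ = _ := by ring

theorem integral_exp_neg_logPot_ball_le_general
    (n : ℕ) (hn : 2 ≤ n)
    (f : EuclideanSpace ℝ (Fin n) → ℝ)
    (hf0 : ∀ y, 0 ≤ f y) (hfi : Integrable f)
    (hlog : ∀ x : EuclideanSpace ℝ (Fin n),
      Integrable (fun y => Real.log (‖y‖ / ‖x - y‖) * f y))
    (p₀ : EuclideanSpace ℝ (Fin n)) (β : ℝ) (hβ : (∫ y, f y) = β) :
    (∫ z in ball p₀ 2, Real.exp ((n : ℝ) * (-(logPot n f z)))) ≤
      (Real.exp ((n : ℝ) * β / (4 * cN n)) * (12 : ℝ) ^ ((n : ℝ) * β / cN n) *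
          ((n : ℝ) * (volume (ball (0 : EuclideanSpace ℝ (Fin n)) 1)).toReal) *
          2 ^ (n : ℝ) / n) *
        Real.exp ((n : ℝ) *
          (-(1 / cN n) * ∫ y in (ball p₀ 10)ᶜ, Real.log (‖y‖ / ‖p₀ - y‖) * f y)) *
        Real.exp ((n : ℝ) *
          (-(1 / cN n) * ∫ y in ball p₀ 10, Real.log ‖y‖ * f y)) := by
  subst hβ
  set c := cN n
  set v := (volume (ball (0 : EuclideanSpace ℝ (Fin n)) 1)).toReal
  set A := -(1 / c) * ∫ y in (ball p₀ 10)ᶜ, Real.log (‖y‖ / ‖p₀ - y‖) * f y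
  set B := -(1 / c) * ∫ y in ball p₀ 10, Real.log ‖y‖ * f y
  have hc : 0 < c := cN_pos (by omega)
  have hβ0 : 0 ≤ ∫ y, f y := integral_nonneg hf0
  have hlog_six_fifths : Real.log (1 + 2 / 10) ≤ 1 / 4 := by
    linarith [Real.log_le_sub_one_of_pos (by norm_num : (0 : ℝ) < 1 + 2 / 10)]
  have hbound : ∀ z ∈ ball p₀ 2, ‖Real.exp ((n : ℝ) * (-(logPot n f z)))‖ ≤
      Real.exp ((n : ℝ) * ((Real.log 12 + 1 / 4) * (∫ y, f y) / c + A + B)) := by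
    intro z hz
    have h := neg_logPot_le (by omega) hf0 hfi hlog hz (by norm_num : (0 : ℝ) < 10) (by norm_num)
    rw [show (2 : ℝ) + 10 = 12 by norm_num] at h
    rw [Real.norm_of_nonneg (Real.exp_nonneg _), Real.exp_le_exp]
    gcongr
    exact h.trans (by gcongr)
  have hvol : volume.real (ball p₀ 2) = 2 ^ n * v := by
    rw [measureReal_def, Measure.addHaar_ball_of_pos _ _ two_pos, finrank_euclideanSpace_fin,
      ENNReal.toReal_mul, ENNReal.toReal_ofReal (by positivity)]
  calc _ ≤ _ :=
        (le_abs_self _).trans (norm_setIntegral_le_of_norm_le_const measure_ball_lt_top hbound)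
    _ = _ := by
      rw [hvol, Real.rpow_natCast, Real.rpow_def_of_pos (by norm_num : (0 : ℝ) < 12)]
      field_simp
      simp only [mul_assoc, ← Real.exp_add]
      rw [mul_comm]
      congr 2
      field_simp
      ring

/-- Proposition 3.8. With `u₋ = -logPot f`, far-field part `u₂`
and constant `c̄`, one has
`∫_{B(p₀,2)} e^{n u₋} ≤ C₁ e^{n u₂(p₀)} e^{n c̄}` where
`C₁ = e^{nβ/(4c_n)} · 12^{nβ/c_n} · ω_{n-1} 2ⁿ / n` and
`ω_{n-1} = n · |B(0,1)|` is the surface measure of the unit sphere. -/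
theorem integral_exp_neg_logPot_ball_le
    (n : ℕ) (hn : 2 ≤ n)
    (f : EuclideanSpace ℝ (Fin n) → ℝ)
    (hfc : Continuous f) (hf0 : ∀ y, 0 ≤ f y) (hfi : Integrable f)
    (hlog : ∀ x : EuclideanSpace ℝ (Fin n),
      Integrable (fun y => Real.log (‖y‖ / ‖x - y‖) * f y))
    (p₀ : EuclideanSpace ℝ (Fin n)) (β : ℝ) (hβ : (∫ y, f y) = β) :
    (∫ z in ball p₀ 2, Real.exp ((n : ℝ) * (-(logPot n f z)))) ≤
      (Real.exp ((n : ℝ) * β / (4 * cN n)) * (12 : ℝ) ^ ((n : ℝ) * β / cN n) *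
          ((n : ℝ) * (volume (ball (0 : EuclideanSpace ℝ (Fin n)) 1)).toReal) *
          2 ^ (n : ℝ) / n) *
        Real.exp ((n : ℝ) *
          (-(1 / cN n) * ∫ y in (ball p₀ 10)ᶜ, Real.log (‖y‖ / ‖p₀ - y‖) * f y)) *
        Real.exp ((n : ℝ) *
          (-(1 / cN n) * ∫ y in ball p₀ 10, Real.log ‖y‖ * f y)) :=
  integral_exp_neg_logPot_ball_le_general n hn f hf0 hfi hlog p₀ β hβ
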